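/- For β ∈ (0,1] with β ≠ 1/2 and W_β = 2β e^{−(2β−1)T} with T mean-one exponential, E[W_β ln W_β] = ln(2β) − (2β−1)/(2β). Moreover E[W_β ln W_β] < ln 2 if and only if β > β_c, where β_c is the unique root in (0,1] of 2β ln β = 2β − 1. -/

import Mathlib

open MeasureTheory ProbabilityTheory Real Set

/-!
Since `log W_β = log (2β) - (2β - 1) T`, the moment `E[W_β log W_β]` reduces to the integrals
of `e^{-2βt}` and `t e^{-2βt}` over `(0, ∞)`. Comparing the result with `log 2` amounts to
`β log β - β < -1/2`; as `b ↦ b log b - b` has derivative `log b < 0` on `(0, 1)`, it is strictly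
decreasing on `[0, 1]` and crosses `-1/2` exactly at `β_c`.
-/

lemma integral_Ioi_exp_neg_mul {r : ℝ} (hr : 0 < r) :
    ∫ x in Ioi (0 : ℝ), exp (-(r * x)) = 1 / r := by
  simpa using integral_rpow_mul_exp_neg_mul_Ioi one_pos hr

lemma integral_Ioi_mul_exp_neg_mul {r : ℝ} (hr : 0 < r) :
    ∫ x in Ioi (0 : ℝ), x * exp (-(r * x)) = 1 / r ^ 2 := by
  have h := integral_rpow_mul_exp_neg_mul_Ioi two_pos hr
  norm_num at h
  rw [h, ← Real.rpow_natCast]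
  norm_num

lemma integrableOn_Ioi_mul_exp_neg_mul {r : ℝ} (hr : 0 < r) :
    IntegrableOn (fun x : ℝ ↦ x * exp (-(r * x))) (Ioi 0) := by
  simpa [neg_mul] using
    integrableOn_rpow_mul_exp_neg_mul_rpow (s := 1) (p := 1) (by norm_num) one_pos hr

namespace ProbabilityTheory

lemma integral_expMeasure {r : ℝ} (hr : 0 < r) (g : ℝ → ℝ) :
    ∫ x, g x ∂expMeasure r = ∫ x in Ioi 0, r * exp (-(r * x)) * g x := by
  have hdensity : ∀ x, (exponentialPDF r x).toReal • g x =
      (Ici 0).indicator (fun x ↦ r * exp (-(r * x)) * g x) x := by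
    intro x
    by_cases hx : 0 ≤ x <;> simp [hx, exponentialPDF_eq, hr.le, exp_nonneg]
  change ∫ x, g x ∂volume.withDensity (exponentialPDF r) = _
  rw [integral_withDensity_eq_integral_toReal_smul (f := exponentialPDF r)
    (measurable_exponentialPDFReal r).ennreal_ofReal
    (.of_forall fun _ ↦ ENNReal.ofReal_lt_top)]
  simp_rw [hdensity]
  rw [integral_indicator measurableSet_Ici, integral_Ici_eq_integral_Ioi]

lemma integral_expMeasure_mul_log_const_mul_exp {r a c : ℝ} (hr : 0 < r) (ha : 0 < a)
    (hrc : 0 < r + c) :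
    ∫ x, a * exp (-(c * x)) * log (a * exp (-(c * x))) ∂expMeasure r =
      r * a / (r + c) * (log a - c / (r + c)) := by
  have hpointwise : ∀ x, r * exp (-(r * x)) * (a * exp (-(c * x)) * log (a * exp (-(c * x)))) =
      r * a * log a * exp (-((r + c) * x)) - r * a * c * (x * exp (-((r + c) * x))) := by
    intro x
    rw [log_mul ha.ne' (exp_ne_zero _), log_exp, add_mul, neg_add, exp_add]
    ring
  have hexp : IntegrableOn (fun x : ℝ ↦ exp (-((r + c) * x))) (Ioi 0) := by
    simpa only [neg_mul] using exp_neg_integrableOn_Ioi 0 hrc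
  rw [integral_expMeasure hr]
  simp_rw [hpointwise]
  rw [integral_sub (hexp.const_mul _) ((integrableOn_Ioi_mul_exp_neg_mul hrc).const_mul _),
    integral_const_mul, integral_const_mul, integral_Ioi_exp_neg_mul hrc,
    integral_Ioi_mul_exp_neg_mul hrc]
  field_simp

end ProbabilityTheory

lemma strictAntiOn_mul_log_sub_self : StrictAntiOn (fun b : ℝ ↦ b * log b - b) (Icc 0 1) := by
  refine strictAntiOn_of_deriv_neg (convex_Icc 0 1)
    (continuous_mul_log.sub continuous_id).continuousOn fun b hb ↦ ?_
  rw [interior_Icc] at hb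
  have hderiv : HasDerivAt (fun b : ℝ ↦ b * log b - b) (log b) b :=
    ((hasDerivAt_mul_log hb.1.ne').sub (hasDerivAt_id' b)).congr_deriv (by ring)
  rw [hderiv.deriv]
  exact log_neg hb.1 hb.2

lemma log_two_mul_sub_lt_log_two_iff {b : ℝ} (hb : 0 < b) :
    log (2 * b) - (2 * b - 1) / (2 * b) < log 2 ↔ b * log b - b < -1 / 2 := by
  have hdiff : log (2 * b) - (2 * b - 1) / (2 * b) - log 2 = (b * log b - b + 1 / 2) / b := by
    rw [log_mul two_ne_zero hb.ne']
    field_simp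
    ring
  rw [← sub_neg, hdiff, div_lt_iff₀ hb, zero_mul]
  constructor <;> intro h <;> linarith

theorem W_beta_log_moment_general
    {Ω : Type*} [MeasurableSpace Ω] (μ : Measure Ω) [IsProbabilityMeasure μ]
    (T : Ω → ℝ) (hT : Measurable T)
    (hlaw : Measure.map T μ = ProbabilityTheory.expMeasure 1)
    (β : ℝ) (hβ : β ∈ Set.Ioc (0 : ℝ) 1)
    (βc : ℝ) (hβc_mem : βc ∈ Set.Ioc (0 : ℝ) 1)
    (hβc_eq : 2 * βc * Real.log βc = 2 * βc - 1) :
    (∫ ω, (2 * β * Real.exp (-((2 * β - 1) * T ω))) *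
        Real.log (2 * β * Real.exp (-((2 * β - 1) * T ω))) ∂μ =
      Real.log (2 * β) - (2 * β - 1) / (2 * β)) ∧
    ((∫ ω, (2 * β * Real.exp (-((2 * β - 1) * T ω))) *
        Real.log (2 * β * Real.exp (-((2 * β - 1) * T ω))) ∂μ < Real.log 2) ↔
      βc < β) := by
  have hβ0 : 0 < β := hβ.1
  set W : ℝ → ℝ := fun t ↦ 2 * β * exp (-((2 * β - 1) * t)) with hW
  have hmoment : ∫ ω, W (T ω) * log (W (T ω)) ∂μ = log (2 * β) - (2 * β - 1) / (2 * β) := by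
    have hcont : Continuous fun t ↦ W t * log (W t) := continuous_mul_log.comp (by fun_prop)
    rw [← integral_map hT.aemeasurable hcont.aestronglyMeasurable, hlaw, hW,
      integral_expMeasure_mul_log_const_mul_exp one_pos (by linarith) (by linarith),
      show (1 : ℝ) + (2 * β - 1) = 2 * β by ring, one_mul, div_self (by positivity), one_mul]
  refine ⟨hmoment, ?_⟩
  have hβc_crit : βc * log βc - βc = -1 / 2 := by linarith
  rw [hmoment, log_two_mul_sub_lt_log_two_iff hβ0, ← hβc_crit]
  exact strictAntiOn_mul_log_sub_self.lt_iff_gt (Ioc_subset_Icc_self hβ)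
    (Ioc_subset_Icc_self hβc_mem)

/-- For `β ∈ (0,1]`, `β ≠ 1/2`, and `W_β = 2β e^{−(2β−1)T}` with `T` mean-one
exponential: `E[W_β ln W_β] = ln(2β) − (2β−1)/(2β)`, and
`E[W_β ln W_β] < ln 2` if and only if `β > β_c`, where `β_c` is the unique
root in `(0,1]` of `2β ln β = 2β − 1`. -/
theorem W_beta_log_moment
    {Ω : Type*} [MeasurableSpace Ω] (μ : Measure Ω) [IsProbabilityMeasure μ]
    (T : Ω → ℝ) (hT : Measurable T)
    (hlaw : Measure.map T μ = ProbabilityTheory.expMeasure 1)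
    (β : ℝ) (hβ : β ∈ Set.Ioc (0 : ℝ) 1) (hne : β ≠ 1 / 2)
    (βc : ℝ) (hβc_mem : βc ∈ Set.Ioc (0 : ℝ) 1)
    (hβc_eq : 2 * βc * Real.log βc = 2 * βc - 1)
    (hβc_uniq : ∀ b ∈ Set.Ioc (0 : ℝ) 1, 2 * b * Real.log b = 2 * b - 1 → b = βc) :
    (∫ ω, (2 * β * Real.exp (-((2 * β - 1) * T ω))) *
        Real.log (2 * β * Real.exp (-((2 * β - 1) * T ω))) ∂μ =
      Real.log (2 * β) - (2 * β - 1) / (2 * β)) ∧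
    ((∫ ω, (2 * β * Real.exp (-((2 * β - 1) * T ω))) *
        Real.log (2 * β * Real.exp (-((2 * β - 1) * T ω))) ∂μ < Real.log 2) ↔
      βc < β) :=
  W_beta_log_moment_general μ T hT hlaw β hβ βc hβc_mem hβc_eq
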